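/- Suppose the KKT point v̄ = (x̄, λ̄) satisfies (A1) and (A2), and for each v ∈ V \ Γ let w(v) = (d(v), μ(v)) be a σ(v)^6-optimal solution of Q(v). Then dist(G(x̄) + G'(x̄)d(v), K) → 0 as ‖v − v̄‖_V → 0; that is, for every ε > 0 there exists δ > 0 such that dist(G(x̄) + G'(x̄)d(v), K) < ε for all v ∈ V \ Γ with ‖v − v̄‖_V < δ. -/

import Mathlib

open Filter Topology Metric Set

noncomputable section

variable {X Y : Type*} [NormedAddCommGroup X] [NormedSpace ℝ X] [CompleteSpace X]
  [NormedAddCommGroup Y] [InnerProductSpace ℝ Y] [CompleteSpace Y]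

/-- The functional `h ↦ ⟪λ, G'(x) h⟫_Y`, i.e. the term `G'(x)* λ ∈ X*`. -/
def adjT (G : X → Y) (x : X) (lam : Y) : X →L[ℝ] ℝ :=
  (innerSL ℝ lam).comp (fderiv ℝ G x)

/-- `L_x(v) = f'(x) + G'(x)* λ`, the partial derivative of the Lagrangian in `x`. -/
def LxD (f : X → ℝ) (G : X → Y) (v : X × Y) : X →L[ℝ] ℝ :=
  fderiv ℝ f v.1 + adjT G v.1 v.2

/-- `L_xx(v)`, the second partial derivative of the Lagrangian in `x`. -/
def LxxD (f : X → ℝ) (G : X → Y) (v : X × Y) : X →L[ℝ] X →L[ℝ] ℝ :=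
  fderiv ℝ (fun z => LxD f G (z, v.2)) v.1

/-- Normal cone `N_K(y)` of the closed convex set `K` at `y`. -/
def NK (K : Set Y) (y : Y) : Set Y := {lam | ∀ p ∈ K, (inner ℝ lam (p - y) : ℝ) ≤ 0}

/-- Tangent cone `T_K(y)` (sequential definition). -/
def TK (K : Set Y) (y : Y) : Set Y :=
  {p | ∃ (yk : ℕ → Y) (tk : ℕ → ℝ), (∀ n, yk n ∈ K) ∧ (∀ n, 0 < tk n) ∧
    Tendsto tk atTop (𝓝 0) ∧ Tendsto (fun n => (tk n)⁻¹ • (yk n - y)) atTop (𝓝 p)}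

/-- KKT point of the problem `min f(x) s.t. G(x) ∈ K`. -/
def IsKKT (f : X → ℝ) (G : X → Y) (K : Set Y) (v : X × Y) : Prop :=
  G v.1 ∈ K ∧ LxD f G v = 0 ∧ v.2 ∈ NK K (G v.1)

/-- `σ(v) = ‖f'(x) + G'(x)*λ‖ + ‖G(x) - P_K(G(x) + λ)‖`. -/
def sigmaF (f : X → ℝ) (G : X → Y) (PK : Y → Y) (v : X × Y) : ℝ :=
  ‖LxD f G v‖ + ‖G v.1 - PK (G v.1 + v.2)‖

/-- The objective `φ_v` of the stabilized subproblem. -/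
def phiQ (f : X → ℝ) (G : X → Y) (PK : Y → Y) (v w : X × Y) : ℝ :=
  fderiv ℝ f v.1 w.1 + (1 / 2) * LxxD f G v w.1 w.1 + (sigmaF f G PK v / 2) * ‖w.2‖ ^ 2

/-- Feasibility for problem `Q(v)`. -/
def FeasQ (f : X → ℝ) (G : X → Y) (K : Set Y) (PK : Y → Y) (ν : ℝ) (v w : X × Y) : Prop :=
  G v.1 + fderiv ℝ G v.1 w.1 - sigmaF f G PK v • (w.2 - v.2) ∈ K ∧ ‖w.1‖ ≤ ν

/-- `w` is an `ε`-optimal solution of problem `Q(v)`. -/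
def IsEpsOpt (f : X → ℝ) (G : X → Y) (K : Set Y) (PK : Y → Y) (ν : ℝ)
    (v w : X × Y) (ε : ℝ) : Prop :=
  FeasQ f G K PK ν v w ∧
    phiQ f G PK v w ≤ sInf (phiQ f G PK v '' {w' | FeasQ f G K PK ν v w'}) + ε

/-- Strict Robinson constraint qualification at `vb = (x̄, λ̄)`. -/
def SRCQ (G : X → Y) (K : Set Y) (vb : X × Y) : Prop :=
  (0 : Y) ∈ interior {y : Y | ∃ h : X, ∃ k ∈ {y' ∈ K | (inner ℝ vb.2 (y' - G vb.1) : ℝ) = 0},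
    y = G vb.1 + fderiv ℝ G vb.1 h - k}

/-! ### Auxiliary lemmas -/

lemma proj_vi {K : Set Y} (hKv : Convex ℝ K) (PK : Y → Y)
    (hPK : ∀ y : Y, PK y ∈ K ∧ ∀ k ∈ K, ‖y - PK y‖ ≤ ‖y - k‖) (y : Y) :
    ∀ k ∈ K, (inner ℝ (y - PK y) (k - PK y) : ℝ) ≤ 0 := by
  haveI : Nonempty K := ⟨⟨PK y, (hPK y).1⟩⟩
  have h1 : ‖y - PK y‖ = ⨅ w : K, ‖y - (w : Y)‖ := by
    apply le_antisymm
    · exact le_ciInf fun w => (hPK y).2 w w.2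
    · have hb : BddBelow (range fun w : K => ‖y - (w : Y)‖) :=
        ⟨0, by rintro b ⟨w, rfl⟩; exact norm_nonneg _⟩
      exact ciInf_le hb ⟨PK y, (hPK y).1⟩
  exact (norm_eq_iInf_iff_real_inner_le_zero hKv (hPK y).1).1 h1

lemma proj_nonexp {K : Set Y} (hKv : Convex ℝ K) (PK : Y → Y)
    (hPK : ∀ y : Y, PK y ∈ K ∧ ∀ k ∈ K, ‖y - PK y‖ ≤ ‖y - k‖) (a b : Y) :
    ‖PK a - PK b‖ ≤ ‖a - b‖ := by
  have h1 := proj_vi hKv PK hPK a (PK b) (hPK b).1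
  have h2 := proj_vi hKv PK hPK b (PK a) (hPK a).1
  set p := PK a; set q := PK b
  have key : ‖p - q‖ ^ 2 ≤ (inner ℝ (a - b) (p - q) : ℝ) := by
    have e : a - b = (p - q) + ((a - p) - (b - q)) := by abel
    rw [e, inner_add_left, real_inner_self_eq_norm_sq, inner_sub_left]
    have h1' : (inner ℝ (a - p) (p - q) : ℝ) = - (inner ℝ (a - p) (q - p) : ℝ) := by
      rw [← inner_neg_right]; congr 1; abel
    linarith [h1, h2, h1']
  have hle := real_inner_le_norm (a - b) (p - q)
  rcases eq_or_lt_of_le (norm_nonneg (p - q)) with h | h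
  · simp [← h]
  · have h2' : ‖p - q‖ * ‖p - q‖ ≤ ‖a - b‖ * ‖p - q‖ := by
      have := key.trans hle
      rw [sq] at this
      exact this
    exact le_of_mul_le_mul_right h2' h

lemma proj_fixed {K : Set Y} (hKv : Convex ℝ K) (PK : Y → Y)
    (hPK : ∀ y : Y, PK y ∈ K ∧ ∀ k ∈ K, ‖y - PK y‖ ≤ ‖y - k‖)
    {g l : Y} (hg : g ∈ K) (hl : ∀ p ∈ K, (inner ℝ l (p - g) : ℝ) ≤ 0) :
    PK (g + l) = g := by
  set u := g + l with hu
  set q := PK u with hq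
  have ha : ‖u - q‖ ≤ ‖u - g‖ := (hPK u).2 g hg
  have hmin : ∀ k ∈ K, ‖u - g‖ ≤ ‖u - k‖ := by
    intro k hk
    have e : u - k = l + (g - k) := by rw [hu]; abel
    have e2 : u - g = l := by rw [hu]; abel
    rw [e, e2]
    have h2 : (0:ℝ) ≤ inner ℝ l (g - k) := by
      have h3 : (inner ℝ l (g - k) : ℝ) = - inner ℝ l (k - g) := by
        rw [← inner_neg_right]; congr 1; abel
      linarith [hl k hk, h3.ge, h3.le]
    nlinarith [norm_add_sq_real l (g - k), norm_nonneg (l + (g - k)), norm_nonneg l,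
      norm_nonneg (g - k), sq_nonneg (‖g - k‖)]
  have hm : (1/2 : ℝ) • q + (1/2 : ℝ) • g ∈ K :=
    hKv (hPK u).1 hg (by norm_num) (by norm_num) (by norm_num)
  have hmid : ‖u - g‖ ≤ ‖u - ((1/2 : ℝ) • q + (1/2 : ℝ) • g)‖ := hmin _ hm
  set A := u - q with hA
  set B := u - g with hB
  have hAB : u - ((1/2 : ℝ) • q + (1/2 : ℝ) • g) = (1/2 : ℝ) • (A + B) := by
    rw [hA, hB]; module
  rw [hAB, norm_smul] at hmid
  have hpar := parallelogram_law_with_norm ℝ A B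
  have hABn : ‖A - B‖ = 0 := by
    simp only [Real.norm_eq_abs] at hmid
    rw [abs_of_pos (by norm_num : (0:ℝ) < 1/2)] at hmid
    nlinarith [norm_nonneg (A - B), norm_nonneg (A + B), norm_nonneg A, norm_nonneg B]
  have hab : A - B = 0 := norm_eq_zero.mp hABn
  have hgq : g - q = 0 := by rw [hA, hB] at hab; rw [← hab]; abel
  exact (sub_eq_zero.mp hgq).symm

lemma sigma_nonneg (f : X → ℝ) (G : X → Y) (PK : Y → Y) (v : X × Y) :
    0 ≤ sigmaF f G PK v :=
  add_nonneg (norm_nonneg _) (norm_nonneg _)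

lemma sigma_pos (f : X → ℝ) (G : X → Y) {K : Set Y} (PK : Y → Y)
    (hKv : Convex ℝ K)
    (hPK : ∀ y : Y, PK y ∈ K ∧ ∀ k ∈ K, ‖y - PK y‖ ≤ ‖y - k‖)
    {v : X × Y} (hv : ¬ IsKKT f G K v) :
    0 < sigmaF f G PK v := by
  rcases (sigma_nonneg f G PK v).lt_or_eq with h | h
  · exact h
  · exfalso; apply hv
    have h1 : ‖LxD f G v‖ = 0 ∧ ‖G v.1 - PK (G v.1 + v.2)‖ = 0 := by
      have h0 : ‖LxD f G v‖ + ‖G v.1 - PK (G v.1 + v.2)‖ = 0 := h.symm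
      constructor <;>
        linarith [norm_nonneg (LxD f G v), norm_nonneg (G v.1 - PK (G v.1 + v.2))]
    have hGP : G v.1 = PK (G v.1 + v.2) := sub_eq_zero.mp (norm_eq_zero.mp h1.2)
    refine ⟨by rw [hGP]; exact (hPK _).1, norm_eq_zero.mp h1.1, ?_⟩
    intro p hp
    have hvi := proj_vi hKv PK hPK (G v.1 + v.2) p hp
    rw [← hGP] at hvi
    simpa using hvi

lemma LxxD_norm_le (f : X → ℝ) (G : X → Y) (hf : ContDiff ℝ 2 f) (hG : ContDiff ℝ 2 G)
    (v : X × Y) :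
    ‖LxxD f G v‖ ≤ ‖fderiv ℝ (fderiv ℝ f) v.1‖ + ‖v.2‖ * ‖fderiv ℝ (fderiv ℝ G) v.1‖ := by
  have h1 : DifferentiableAt ℝ (fderiv ℝ f) v.1 :=
    ((hf.fderiv_right (by norm_num : (1:WithTop ℕ∞) + 1 ≤ 2)).differentiable one_ne_zero).differentiableAt
  have h2 : DifferentiableAt ℝ (fderiv ℝ G) v.1 :=
    ((hG.fderiv_right (by norm_num : (1:WithTop ℕ∞) + 1 ≤ 2)).differentiable one_ne_zero).differentiableAt
  set L : (X →L[ℝ] Y) →L[ℝ] (X →L[ℝ] ℝ) :=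
    ContinuousLinearMap.compL ℝ X Y ℝ (innerSL ℝ v.2) with hL
  have hH : HasFDerivAt (fun z => LxD f G (z, v.2))
      (fderiv ℝ (fderiv ℝ f) v.1 + L.comp (fderiv ℝ (fderiv ℝ G) v.1)) v.1 := by
    have e : (fun z => LxD f G (z, v.2)) = fun z => fderiv ℝ f z + L (fderiv ℝ G z) := by
      funext z
      simp only [LxD, adjT, hL, ContinuousLinearMap.compL_apply]
    rw [e]
    exact h1.hasFDerivAt.add ((L.hasFDerivAt).comp v.1 h2.hasFDerivAt)
  have hLxx : LxxD f G v =
      fderiv ℝ (fderiv ℝ f) v.1 + L.comp (fderiv ℝ (fderiv ℝ G) v.1) := hH.fderiv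
  rw [hLxx]
  refine (norm_add_le (fderiv ℝ (fderiv ℝ f) v.1) (L.comp (fderiv ℝ (fderiv ℝ G) v.1))).trans ?_
  have hLn : ‖L‖ ≤ ‖v.2‖ := by
    refine ContinuousLinearMap.opNorm_le_bound _ (norm_nonneg v.2) fun T => ?_
    rw [hL]
    calc ‖(ContinuousLinearMap.compL ℝ X Y ℝ (innerSL ℝ v.2)) T‖
        = ‖(innerSL ℝ v.2).comp T‖ := by rw [ContinuousLinearMap.compL_apply]
      _ ≤ ‖innerSL ℝ v.2‖ * ‖T‖ := ContinuousLinearMap.opNorm_comp_le _ _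
      _ = ‖v.2‖ * ‖T‖ := by rw [innerSL_apply_norm]
  have hcomp : ‖L.comp (fderiv ℝ (fderiv ℝ G) v.1)‖ ≤ ‖v.2‖ * ‖fderiv ℝ (fderiv ℝ G) v.1‖ := by
    refine (ContinuousLinearMap.opNorm_comp_le _ _).trans ?_
    exact mul_le_mul_of_nonneg_right hLn (norm_nonneg _)
  linarith

lemma cont_delta {α β : Type*} [SeminormedAddCommGroup α] [SeminormedAddCommGroup β]
    {h : α → β} {x0 : α} (hc : ContinuousAt h x0) {e : ℝ} (he : 0 < e) :
    ∃ δ > (0:ℝ), ∀ x, ‖x - x0‖ < δ → ‖h x - h x0‖ < e := by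
  rcases Metric.continuousAt_iff.mp hc e he with ⟨δ, hδ, H⟩
  exact ⟨δ, hδ, fun x hx => by
    simpa [dist_eq_norm] using H (by simpa [dist_eq_norm] using hx)⟩

set_option maxHeartbeats 1000000 in
/-- under (A1), (A2), `dist(G(x̄) + G'(x̄)d(v), K) → 0` as `‖v - v̄‖_V → 0`. -/
theorem stmt5
    (f : X → ℝ) (G : X → Y) (K : Set Y) (PK : Y → Y) (ν : ℝ)
    (hK : K.Nonempty) (hKc : IsClosed K) (hKv : Convex ℝ K)
    (hf : ContDiff ℝ 2 f) (hG : ContDiff ℝ 2 G)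
    (hPK : ∀ y : Y, PK y ∈ K ∧ ∀ k ∈ K, ‖y - PK y‖ ≤ ‖y - k‖)
    (hν : 0 < ν)
    (xb : X) (lb : Y) (hKKT : IsKKT f G K (xb, lb))
    (hA1 : SRCQ G K (xb, lb))
    (c η : ℝ) (hc : 0 < c) (hη : 0 < η)
    (hA2 : ∀ d : X, fderiv ℝ f xb d ≤ η * ‖d‖ → fderiv ℝ G xb d ∈ TK K (G xb) →
      c * ‖d‖ ^ 2 ≤ LxxD f G (xb, lb) d d)
    (hνa : ∃ κ > (0:ℝ), ∀ d : X, ‖d‖ ≤ ν →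
      infDist d {d' : X | fderiv ℝ G xb d' ∈ TK K (G xb)} ≤
        κ * infDist (G xb + fderiv ℝ G xb d) K)
    (hνb : ∀ d : X, ‖d‖ ≤ ν → -(η / 4) * ‖d‖ ≤ LxxD f G (xb, lb) d d)
    (w : X × Y → X × Y)
    (hw : ∀ v : X × Y, ¬ IsKKT f G K v →
      IsEpsOpt f G K PK ν v (w v) (sigmaF f G PK v ^ 6)) :
    ∀ ε > (0:ℝ), ∃ δ > (0:ℝ), ∀ v : X × Y, ¬ IsKKT f G K v →
      ‖v.1 - xb‖ + ‖v.2 - lb‖ < δ →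
      infDist (G xb + fderiv ℝ G xb (w v).1) K < ε := by
  intro ε hε
  have hfd1 : ContDiff ℝ 1 (fderiv ℝ f) := hf.fderiv_right (by norm_num : (1:WithTop ℕ∞) + 1 ≤ 2)
  have hGd1 : ContDiff ℝ 1 (fderiv ℝ G) := hG.fderiv_right (by norm_num : (1:WithTop ℕ∞) + 1 ≤ 2)
  have contf' : Continuous (fderiv ℝ f) := hfd1.continuous
  have contG' : Continuous (fderiv ℝ G) := hGd1.continuous
  have contf'' : Continuous (fderiv ℝ (fderiv ℝ f)) := hfd1.continuous_fderiv one_ne_zero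
  have contG'' : Continuous (fderiv ℝ (fderiv ℝ G)) := hGd1.continuous_fderiv one_ne_zero
  have contG : Continuous G := hG.continuous
  have contPK : Continuous PK := by
    refine (LipschitzWith.of_dist_le_mul (K := 1) fun a b => ?_).continuous
    rw [dist_eq_norm, dist_eq_norm, NNReal.coe_one, one_mul]
    exact proj_nonexp hKv PK hPK a b
  have contadj : Continuous fun v : X × Y => adjT G v.1 v.2 := by
    simp only [adjT]
    exact Continuous.clm_comp ((innerSL ℝ).continuous.comp continuous_snd)
      (contG'.comp continuous_fst)
  have contLxD : Continuous (LxD f G) := by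
    show Continuous fun v : X × Y => fderiv ℝ f v.1 + adjT G v.1 v.2
    exact (contf'.comp continuous_fst).add contadj
  have contσ : Continuous (sigmaF f G PK) := by
    show Continuous fun v : X × Y => ‖LxD f G v‖ + ‖G v.1 - PK (G v.1 + v.2)‖
    exact contLxD.norm.add (((contG.comp continuous_fst).sub
      (contPK.comp ((contG.comp continuous_fst).add continuous_snd))).norm)
  have hσvb : sigmaF f G PK (xb, lb) = 0 := by
    have hproj : PK (G xb + lb) = G xb :=
      proj_fixed hKv PK hPK hKKT.1 (fun p hp => hKKT.2.2 p hp)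
    show ‖LxD f G (xb, lb)‖ + ‖G xb - PK (G xb + lb)‖ = 0
    rw [hKKT.2.1, hproj]; simp
  set A := ‖fderiv ℝ f xb‖ + 1 with hA_def
  set B := ‖fderiv ℝ (fderiv ℝ f) xb‖ + 1
    + (‖lb‖ + 1) * (‖fderiv ℝ (fderiv ℝ G) xb‖ + 1) with hB_def
  set Lam := ‖lb‖ + 1 with hLam_def
  set C := (Lam + 1) ^ 2 + 2 + 2 * A * ν + B * ν ^ 2 with hC_def
  have hApos : 0 < A := by positivity
  have hBpos : 0 < B := by positivity
  have hLpos : 0 < Lam := by positivity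
  have hCpos : 0 < C := by positivity
  set s := min 1 (min (ε / (4 * Lam)) (ε ^ 2 / (16 * C))) with hs_def
  have hspos : 0 < s := by
    refine lt_min one_pos (lt_min ?_ ?_) <;> positivity
  clear_value A B Lam C s
  obtain ⟨δ1, hδ1, H1⟩ := cont_delta (contf'.continuousAt (x := xb)) one_pos
  obtain ⟨δ2, hδ2, H2⟩ := cont_delta (h := fderiv ℝ (fderiv ℝ f)) (x0 := xb) (by exact contf''.continuousAt) one_pos
  obtain ⟨δ3, hδ3, H3⟩ := cont_delta (h := fderiv ℝ (fderiv ℝ G)) (x0 := xb) (by exact contG''.continuousAt) one_pos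
  obtain ⟨δ4, hδ4, H4⟩ := cont_delta (contG.continuousAt (x := xb))
    (by positivity : (0:ℝ) < ε / 4)
  obtain ⟨δ5, hδ5, H5⟩ := cont_delta (contG'.continuousAt (x := xb))
    (by positivity : (0:ℝ) < ε / (4 * ν))
  obtain ⟨δ6, hδ6, H6⟩ := cont_delta (contσ.continuousAt (x := (xb, lb))) hspos
  refine ⟨min 1 (min δ1 (min δ2 (min δ3 (min δ4 (min δ5 δ6))))),
    lt_min one_pos (lt_min hδ1 (lt_min hδ2 (lt_min hδ3 (lt_min hδ4 (lt_min hδ5 hδ6))))), ?_⟩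
  intro v hv hvδ
  have hx1 : ‖v.1 - xb‖ < min 1 (min δ1 (min δ2 (min δ3 (min δ4 (min δ5 δ6))))) :=
    lt_of_le_of_lt (le_add_of_nonneg_right (norm_nonneg _)) hvδ
  have hx2 : ‖v.2 - lb‖ < min 1 (min δ1 (min δ2 (min δ3 (min δ4 (min δ5 δ6))))) :=
    lt_of_le_of_lt (le_add_of_nonneg_left (norm_nonneg _)) hvδ
  simp only [lt_min_iff] at hx1 hx2
  obtain ⟨hx1a, hx1b, hx1c, hx1d, hx1e, hx1f, hx1g⟩ := hx1
  obtain ⟨hx2a, -, -, -, -, -, hx2g⟩ := hx2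
  have hσpos : 0 < sigmaF f G PK v := sigma_pos f G PK hKv hPK hv
  have hσs : sigmaF f G PK v < s := by
    have hd6 : ‖v - (xb, lb)‖ < δ6 := by
      rw [Prod.norm_def]
      exact max_lt (by simpa using hx1g) (by simpa using hx2g)
    have := H6 v hd6
    rw [hσvb, sub_zero, Real.norm_eq_abs, abs_of_pos hσpos] at this
    exact this
  have hσs2 : sigmaF f G PK v < min 1 (min (ε / (4 * Lam)) (ε ^ 2 / (16 * C))) := by
    rw [← hs_def]; exact hσs
  have hσ1 : sigmaF f G PK v ≤ 1 := (hσs2.trans_le (min_le_left _ _)).le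
  have hσL : sigmaF f G PK v < ε / (4 * Lam) :=
    hσs2.trans_le ((min_le_right _ _).trans (min_le_left _ _))
  have hσC : sigmaF f G PK v < ε ^ 2 / (16 * C) :=
    hσs2.trans_le ((min_le_right _ _).trans (min_le_right _ _))
  have hfd : ‖fderiv ℝ f v.1‖ ≤ A := by
    have := H1 v.1 hx1b
    have h' := norm_sub_norm_le (fderiv ℝ f v.1) (fderiv ℝ f xb)
    rw [hA_def]; linarith
  have hf2 : ‖fderiv ℝ (fderiv ℝ f) v.1‖ ≤ ‖fderiv ℝ (fderiv ℝ f) xb‖ + 1 := by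
    have := H2 v.1 hx1c
    have h' := norm_sub_norm_le (fderiv ℝ (fderiv ℝ f) v.1) (fderiv ℝ (fderiv ℝ f) xb)
    linarith
  have hG2 : ‖fderiv ℝ (fderiv ℝ G) v.1‖ ≤ ‖fderiv ℝ (fderiv ℝ G) xb‖ + 1 := by
    have := H3 v.1 hx1d
    have h' := norm_sub_norm_le (fderiv ℝ (fderiv ℝ G) v.1) (fderiv ℝ (fderiv ℝ G) xb)
    linarith
  have hv2n : ‖v.2‖ ≤ ‖lb‖ + 1 := by
    have h' := norm_sub_norm_le v.2 lb
    linarith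
  have hlamL : ‖v.2‖ ≤ Lam := by rw [hLam_def]; exact hv2n
  have hLxx : ‖LxxD f G v‖ ≤ B := by
    refine (LxxD_norm_le f G hf hG v).trans ?_
    rw [hB_def]
    have hm : ‖v.2‖ * ‖fderiv ℝ (fderiv ℝ G) v.1‖
        ≤ Lam * (‖fderiv ℝ (fderiv ℝ G) xb‖ + 1) :=
      mul_le_mul hlamL hG2 (by positivity) hLpos.le
    exact add_le_add hf2 hm
  obtain ⟨⟨hk0, hdν⟩, hopt⟩ := hw v hv
  have hlow : ∀ w' : X × Y, FeasQ f G K PK ν v w' →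
      -(A * ν) - B * ν ^ 2 / 2 + (sigmaF f G PK v / 2) * ‖w'.2‖ ^ 2 ≤ phiQ f G PK v w' := by
    intro w' hw'
    have hd' : ‖w'.1‖ ≤ ν := hw'.2
    have e1 : |fderiv ℝ f v.1 w'.1| ≤ A * ν := by
      have h0 := (fderiv ℝ f v.1).le_opNorm w'.1
      rw [Real.norm_eq_abs] at h0
      exact h0.trans (mul_le_mul hfd hd' (norm_nonneg _) hApos.le)
    have e2 : |LxxD f G v w'.1 w'.1| ≤ B * ν ^ 2 := by
      have h0 := (LxxD f G v w'.1).le_opNorm w'.1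
      rw [Real.norm_eq_abs] at h0
      have h1 := (LxxD f G v).le_opNorm w'.1
      have h2 : ‖LxxD f G v w'.1‖ * ‖w'.1‖ ≤ B * ν ^ 2 := by
        have hn1 : ‖LxxD f G v w'.1‖ ≤ B * ν :=
          h1.trans (mul_le_mul hLxx hd' (norm_nonneg _) hBpos.le)
        calc ‖LxxD f G v w'.1‖ * ‖w'.1‖ ≤ (B * ν) * ν :=
              mul_le_mul hn1 hd' (norm_nonneg _) (by positivity)
          _ = B * ν ^ 2 := by ring
      exact h0.trans h2
    have key : ∀ r1 r2 t : ℝ, |r1| ≤ A * ν → |r2| ≤ B * ν ^ 2 →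
        -(A * ν) - B * ν ^ 2 / 2 + (sigmaF f G PK v / 2) * t
          ≤ r1 + 1 / 2 * r2 + (sigmaF f G PK v / 2) * t := by
      intro r1 r2 t h1 h2
      have h1' := abs_le.mp h1
      have h2' := abs_le.mp h2
      linarith [h1'.1, h2'.1]
    simp only [phiQ]
    exact key _ _ _ e1 e2
  have hbdd : BddBelow (phiQ f G PK v '' {w' | FeasQ f G K PK ν v w'}) := by
    refine ⟨-(A * ν) - B * ν ^ 2 / 2, ?_⟩
    rintro r ⟨w', hw', rfl⟩
    have h0 := hlow w' hw'
    have h1 : 0 ≤ (sigmaF f G PK v / 2) * ‖w'.2‖ ^ 2 := by positivity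
    linarith
  set u := G v.1 - PK (G v.1) with hu_def
  clear_value u
  set w0 : X × Y := (0, v.2 + (sigmaF f G PK v)⁻¹ • u) with hw0_def
  have hw01 : w0.1 = (0:X) := by rw [hw0_def]
  have hw02 : w0.2 = v.2 + (sigmaF f G PK v)⁻¹ • u := by rw [hw0_def]
  clear_value w0
  have hunorm : ‖u‖ ≤ sigmaF f G PK v := by
    have hu1 : ‖u‖ ≤ ‖G v.1 - PK (G v.1 + v.2)‖ := by
      rw [hu_def]
      exact (hPK (G v.1)).2 _ (hPK (G v.1 + v.2)).1
    have hu2 : ‖G v.1 - PK (G v.1 + v.2)‖ ≤ sigmaF f G PK v := by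
      show _ ≤ ‖LxD f G v‖ + ‖G v.1 - PK (G v.1 + v.2)‖
      linarith [norm_nonneg (LxD f G v)]
    exact hu1.trans hu2
  have hfeas0 : FeasQ f G K PK ν v w0 := by
    constructor
    · have h2 : sigmaF f G PK v • (w0.2 - v.2) = u := by
        rw [hw02, add_sub_cancel_left, smul_smul, mul_inv_cancel₀ hσpos.ne', one_smul]
      have h3 : G v.1 + fderiv ℝ G v.1 w0.1 - sigmaF f G PK v • (w0.2 - v.2)
          = PK (G v.1) := by
        rw [h2, hw01, map_zero, add_zero, hu_def]
        abel
      rw [h3]; exact (hPK _).1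
    · rw [hw01]
      simp [hν.le]
  have hμ0 : ‖w0.2‖ ≤ Lam + 1 := by
    rw [hw02]
    refine (norm_add_le v.2 ((sigmaF f G PK v)⁻¹ • u)).trans ?_
    have hi : ‖(sigmaF f G PK v)⁻¹ • u‖ ≤ 1 := by
      rw [norm_smul, Real.norm_eq_abs, abs_of_pos (inv_pos.mpr hσpos)]
      calc (sigmaF f G PK v)⁻¹ * ‖u‖ ≤ (sigmaF f G PK v)⁻¹ * sigmaF f G PK v :=
            mul_le_mul_of_nonneg_left hunorm (inv_pos.mpr hσpos).le
        _ = 1 := inv_mul_cancel₀ hσpos.ne'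
    linarith [hlamL]
  have hφ0 : phiQ f G PK v w0 = (sigmaF f G PK v / 2) * ‖w0.2‖ ^ 2 := by
    simp only [phiQ]
    rw [hw01]
    simp
  have hinf : phiQ f G PK v (w v) ≤ (sigmaF f G PK v / 2) * (Lam + 1) ^ 2
      + sigmaF f G PK v ^ 6 := by
    have h1 : sInf (phiQ f G PK v '' {w' | FeasQ f G K PK ν v w'}) ≤ phiQ f G PK v w0 :=
      csInf_le hbdd ⟨w0, hfeas0, rfl⟩
    have h2 : phiQ f G PK v w0 ≤ (sigmaF f G PK v / 2) * (Lam + 1) ^ 2 := by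
      rw [hφ0]
      have := pow_le_pow_left₀ (norm_nonneg w0.2) hμ0 2
      have hh : 0 ≤ sigmaF f G PK v / 2 := by positivity
      exact mul_le_mul_of_nonneg_left this hh
    linarith [hopt]
  have hkey : (sigmaF f G PK v * ‖(w v).2‖) ^ 2 ≤ sigmaF f G PK v * C := by
    have hl := hlow (w v) ⟨hk0, hdν⟩
    have h3 : sigmaF f G PK v * ‖(w v).2‖ ^ 2
        ≤ sigmaF f G PK v * (Lam + 1) ^ 2 + 2 * sigmaF f G PK v ^ 6
          + 2 * (A * ν) + B * ν ^ 2 := by linarith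
    have h4 : sigmaF f G PK v ^ 6 ≤ 1 := pow_le_one₀ hσpos.le hσ1
    have h5 : sigmaF f G PK v * (Lam + 1) ^ 2 ≤ (Lam + 1) ^ 2 :=
      mul_le_of_le_one_left (by positivity) hσ1
    have h6 : sigmaF f G PK v * ‖(w v).2‖ ^ 2 ≤ C := by rw [hC_def]; linarith
    calc (sigmaF f G PK v * ‖(w v).2‖) ^ 2
        = sigmaF f G PK v * (sigmaF f G PK v * ‖(w v).2‖ ^ 2) := by ring
      _ ≤ sigmaF f G PK v * C := mul_le_mul_of_nonneg_left h6 hσpos.le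
  have hσμ : sigmaF f G PK v * ‖(w v).2‖ < ε / 4 := by
    have h7 : sigmaF f G PK v * C < ε ^ 2 / 16 := by
      calc sigmaF f G PK v * C < (ε ^ 2 / (16 * C)) * C := mul_lt_mul_of_pos_right hσC hCpos
        _ = ε ^ 2 / 16 := by field_simp
    have h8 : (sigmaF f G PK v * ‖(w v).2‖) ^ 2 < (ε / 4) ^ 2 := by
      have : (ε / 4) ^ 2 = ε ^ 2 / 16 := by ring
      rw [this]
      exact lt_of_le_of_lt hkey h7
    exact lt_of_pow_lt_pow_left₀ 2 (by positivity) h8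
  have hσl : sigmaF f G PK v * ‖v.2‖ < ε / 4 := by
    calc sigmaF f G PK v * ‖v.2‖ ≤ sigmaF f G PK v * Lam :=
          mul_le_mul_of_nonneg_left hlamL hσpos.le
      _ < (ε / (4 * Lam)) * Lam := mul_lt_mul_of_pos_right hσL hLpos
      _ = ε / 4 := by field_simp
  have hfinal : dist (G xb + fderiv ℝ G xb (w v).1)
      (G v.1 + fderiv ℝ G v.1 (w v).1 - sigmaF f G PK v • ((w v).2 - v.2)) < ε := by
    rw [dist_eq_norm]
    have e : (G xb + fderiv ℝ G xb (w v).1)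
        - (G v.1 + fderiv ℝ G v.1 (w v).1 - sigmaF f G PK v • ((w v).2 - v.2))
        = (G xb - G v.1) + ((fderiv ℝ G xb - fderiv ℝ G v.1) (w v).1)
          + sigmaF f G PK v • ((w v).2 - v.2) := by
      simp only [ContinuousLinearMap.sub_apply]
      abel
    rw [e]
    have t1 : ‖G xb - G v.1‖ < ε / 4 := by
      rw [norm_sub_rev]; exact H4 v.1 hx1e
    have t2 : ‖(fderiv ℝ G xb - fderiv ℝ G v.1) (w v).1‖ < ε / 4 := by
      refine ((fderiv ℝ G xb - fderiv ℝ G v.1).le_opNorm (w v).1).trans_lt ?_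
      have h9 : ‖fderiv ℝ G xb - fderiv ℝ G v.1‖ < ε / (4 * ν) := by
        rw [norm_sub_rev]; exact H5 v.1 hx1f
      calc ‖fderiv ℝ G xb - fderiv ℝ G v.1‖ * ‖(w v).1‖
          ≤ ‖fderiv ℝ G xb - fderiv ℝ G v.1‖ * ν :=
            mul_le_mul_of_nonneg_left hdν (norm_nonneg _)
        _ < (ε / (4 * ν)) * ν := mul_lt_mul_of_pos_right h9 hν
        _ = ε / 4 := by field_simp
    have t3 : ‖sigmaF f G PK v • ((w v).2 - v.2)‖ < ε / 2 := by
      rw [norm_smul, Real.norm_eq_abs, abs_of_pos hσpos]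
      calc sigmaF f G PK v * ‖(w v).2 - v.2‖
          ≤ sigmaF f G PK v * (‖(w v).2‖ + ‖v.2‖) :=
            mul_le_mul_of_nonneg_left (norm_sub_le _ _) hσpos.le
        _ = sigmaF f G PK v * ‖(w v).2‖ + sigmaF f G PK v * ‖v.2‖ := by ring
        _ < ε / 4 + ε / 4 := add_lt_add hσμ hσl
        _ = ε / 2 := by ring
    calc ‖(G xb - G v.1) + ((fderiv ℝ G xb - fderiv ℝ G v.1) (w v).1)
          + sigmaF f G PK v • ((w v).2 - v.2)‖
        ≤ ‖(G xb - G v.1) + ((fderiv ℝ G xb - fderiv ℝ G v.1) (w v).1)‖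
          + ‖sigmaF f G PK v • ((w v).2 - v.2)‖ := norm_add_le _ _
      _ ≤ ‖G xb - G v.1‖ + ‖(fderiv ℝ G xb - fderiv ℝ G v.1) (w v).1‖
          + ‖sigmaF f G PK v • ((w v).2 - v.2)‖ := by
            linarith [norm_add_le (G xb - G v.1) ((fderiv ℝ G xb - fderiv ℝ G v.1) (w v).1)]
      _ < ε / 4 + ε / 4 + ε / 2 := by linarith
      _ = ε := by ring
  exact lt_of_le_of_lt (infDist_le_dist_of_mem hk0) hfinal
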